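/- arXiv:math/0401175 — 2 statements merged into one kernel-verified Lean document; each statement's English description precedes it below -/
import Mathlib

section
/- For any 0/1-labeling of a rooted binary tree T with n nodes, equality (b00 − b01)/2 + b10 = (n+1)/2 holds if and only if the root is labeled 1 and every leaf is labeled 0. -/
/-- A rooted tree on `Fin n` with root `0`, given by a parent function.
Every non-root node's parent has a smaller index, which makes the graph acyclic
and connected to the root. -/
structure PhyloTree (n : ℕ) where
  parent : Fin n → Fin n
  root_fixed : ∀ v : Fin n, v.val = 0 → parent v = v
  parent_lt : ∀ v : Fin n, v.val ≠ 0 → (parent v).val < v.val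

namespace PhyloTree

variable {n : ℕ}

/-- Transition count `b ℓ i j`: the number of edges from a parent labeled `i`
to a child labeled `j`, for the `0/1`-labeling `ℓ`. -/
def b (T : PhyloTree n) (ℓ : Fin n → Fin 2) (i j : Fin 2) : ℕ :=
  (Finset.univ.filter (fun v : Fin n =>
    v.val ≠ 0 ∧ ℓ (T.parent v) = i ∧ ℓ v = j)).card

/-- The set of children of a node. -/
def children (T : PhyloTree n) (v : Fin n) : Finset (Fin n) :=
  Finset.univ.filter (fun w => w.val ≠ 0 ∧ T.parent w = v)

/-- A leaf is a node with no children. -/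
def IsLeaf (T : PhyloTree n) (v : Fin n) : Prop := T.children v = ∅

instance (T : PhyloTree n) (v : Fin n) : Decidable (T.IsLeaf v) :=
  inferInstanceAs (Decidable (T.children v = ∅))

/-- A rooted tree is binary if every non-leaf node has exactly two children. -/
def IsBinary (T : PhyloTree n) : Prop :=
  ∀ v : Fin n, T.IsLeaf v ∨ (T.children v).card = 2

/-- The finset of leaves. -/
def leaves (T : PhyloTree n) : Finset (Fin n) :=
  Finset.univ.filter (fun v => T.IsLeaf v)

end PhyloTree

/-!
Counting the edges by the label of the child gives `b 0 j + b 1 j = #{non-root nodes labeled j}`,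
and counting them by the label of the parent gives `b 1 0 + b 1 1 = 2 · #{internal nodes labeled 1}`
in a binary tree. Eliminating `b 0 0` and `b 1 1` yields
`b 0 0 - b 0 1 + 2 b 1 0 = n - 1 + 2 [root labeled 1] - 2 #{leaves labeled 1}`,
whose right-hand side attains `n + 1` exactly when the root is labeled 1 and no leaf is.
-/

open Finset in
lemma Finset.card_filter_eq_zero_add_card_filter_eq_one {α : Type*} (s : Finset α)
    (ℓ : α → Fin 2) : #{x ∈ s | ℓ x = 0} + #{x ∈ s | ℓ x = 1} = #s := by
  rw [← card_filter_add_card_filter_not (s := s) (fun x => ℓ x = 0)]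
  congr 2
  ext x
  obtain h | h : ℓ x = 0 ∨ ℓ x = 1 := by omega
  all_goals simp [h]

namespace PhyloTree

open Finset

variable {n : ℕ}

lemma card_filter_eq_card_filter_nonroot_add (hn : 0 < n) (p : Fin n → Prop) [DecidablePred p] :
    #{v | p v} = #{v : Fin n | v.val ≠ 0 ∧ p v} + if p ⟨0, hn⟩ then 1 else 0 := by
  have hroot : #{v : Fin n | v.val = 0 ∧ p v} = if p ⟨0, hn⟩ then 1 else 0 := by
    have : ({v : Fin n | v.val = 0 ∧ p v} : Finset (Fin n)) = ({⟨0, hn⟩} : Finset _).filter p := by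
      ext v; simp [Fin.ext_iff]
    rw [this, filter_singleton]
    split_ifs <;> rfl
  rw [← hroot, card_filter, card_filter, card_filter, ← sum_add_distrib]
  refine sum_congr rfl fun v _ => ?_
  by_cases hv : v.val = 0 <;> simp [hv]

variable (T : PhyloTree n) (ℓ : Fin n → Fin 2)

lemma b_add_b_left (j : Fin 2) :
    T.b ℓ 0 j + T.b ℓ 1 j = #{v : Fin n | v.val ≠ 0 ∧ ℓ v = j} := by
  simp only [b, card_filter, ← sum_add_distrib]
  refine sum_congr rfl fun v _ => ?_
  obtain h | h : ℓ (T.parent v) = 0 ∨ ℓ (T.parent v) = 1 := by omega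
  all_goals simp [h]

lemma b_add_b_right (i : Fin 2) :
    T.b ℓ i 0 + T.b ℓ i 1 = #{w : Fin n | w.val ≠ 0 ∧ ℓ (T.parent w) = i} := by
  simp only [b, card_filter, ← sum_add_distrib]
  refine sum_congr rfl fun v _ => ?_
  obtain h | h : ℓ v = 0 ∨ ℓ v = 1 := by omega
  all_goals simp [h]

lemma sum_card_children (s : Finset (Fin n)) :
    ∑ v ∈ s, #(T.children v) = #{w : Fin n | w.val ≠ 0 ∧ T.parent w ∈ s} := by
  rw [card_eq_sum_card_fiberwise (f := T.parent) (t := s) (fun w hw => (mem_filter.mp hw).2.2)]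
  refine sum_congr rfl fun v hv => congrArg card ?_
  ext w
  simp only [children, mem_filter, mem_univ, true_and]
  constructor
  · rintro ⟨hw, rfl⟩; exact ⟨⟨hw, hv⟩, rfl⟩
  · rintro ⟨⟨hw, _⟩, rfl⟩; exact ⟨hw, rfl⟩

lemma IsBinary.card_children {T : PhyloTree n} (hT : T.IsBinary) (v : Fin n) :
    #(T.children v) = if T.IsLeaf v then 0 else 2 := by
  rcases hT v with hv | hv
  · rw [if_pos hv, hv, card_empty]
  · have hv' : ¬ T.IsLeaf v := fun hl => by simp [show T.children v = ∅ from hl] at hv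
    rw [if_neg hv', hv]

lemma IsBinary.sum_card_children {T : PhyloTree n} (hT : T.IsBinary) (s : Finset (Fin n)) :
    ∑ v ∈ s, #(T.children v) = 2 * #{v ∈ s | ¬ T.IsLeaf v} := by
  simp only [hT.card_children, sum_ite, sum_const_zero, zero_add, sum_const, smul_eq_mul, mul_comm]

lemma IsBinary.b_add_b_right {T : PhyloTree n} (hT : T.IsBinary) (i : Fin 2) :
    T.b ℓ i 0 + T.b ℓ i 1 = 2 * #{v | ℓ v = i ∧ ¬ T.IsLeaf v} := by
  calc T.b ℓ i 0 + T.b ℓ i 1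
      = ∑ v ∈ {v | ℓ v = i}, #(T.children v) := by
        rw [T.b_add_b_right, T.sum_card_children]; simp
    _ = 2 * #{v | ℓ v = i ∧ ¬ T.IsLeaf v} := by rw [hT.sum_card_children, filter_filter]

lemma IsBinary.b00_sub_b01_add_two_mul_b10 {T : PhyloTree n} (hn : 0 < n) (hT : T.IsBinary) :
    (T.b ℓ 0 0 : ℤ) - T.b ℓ 0 1 + 2 * T.b ℓ 1 0
      = n - 1 + 2 * (if ℓ ⟨0, hn⟩ = 1 then 1 else 0) - 2 * #{v | ℓ v = 1 ∧ T.IsLeaf v} := by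
  have in0 := T.b_add_b_left ℓ 0
  have in1 := T.b_add_b_left ℓ 1
  have out1 := hT.b_add_b_right ℓ 1
  have nodes : n = #{v : Fin n | v.val ≠ 0} + 1 := by
    simpa using card_filter_eq_card_filter_nonroot_add hn (fun _ => True)
  have ones := card_filter_eq_card_filter_nonroot_add hn (fun v => ℓ v = 1)
  have nonroot := card_filter_eq_zero_add_card_filter_eq_one {v : Fin n | v.val ≠ 0} ℓ
  have leaves1 := card_filter_add_card_filter_not (s := {v | ℓ v = 1}) (fun v => T.IsLeaf v)
  simp only [filter_filter] at nonroot leaves1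
  split_ifs at ones ⊢ <;> push_cast <;> omega

end PhyloTree

open Finset in
/-- equality b00 − b01 + 2·b10 = n + 1 holds iff the root is labeled 1
and every leaf is labeled 0. -/
theorem stmt3 {n : ℕ} (hn : 0 < n) (T : PhyloTree n) (hT : T.IsBinary)
    (ℓ : Fin n → Fin 2) :
    ((T.b ℓ 0 0 : ℤ) - T.b ℓ 0 1 + 2 * T.b ℓ 1 0 = n + 1)
      ↔ (ℓ ⟨0, hn⟩ = 1 ∧ ∀ v : Fin n, T.IsLeaf v → ℓ v = 0) := by
  have no_leaf_one : #{v | ℓ v = 1 ∧ T.IsLeaf v} = 0 ↔ ∀ v, T.IsLeaf v → ℓ v = 0 := by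
    simp only [card_eq_zero, filter_eq_empty_iff, mem_univ, true_implies, not_and']
    exact forall_congr' fun v => imp_congr_right fun _ => by omega
  rw [hT.b00_sub_b01_add_two_mul_b10 ℓ hn, ← no_leaf_one]
  split_ifs with hroot <;> simp only [hroot, true_and, false_and, iff_false] <;> omega
end

section
/- Every transition vector (b00,b01,b10,b11) of a 0/1-labeling of a rooted binary tree with n nodes satisfies the six constraints: b_ij ≥ 0 for all i,j; b00+b01+b10+b11 = n−1; b00 − b01 + 2b10 ≤ n+1; and b11 − b10 + 2b01 ≤ n+1. -/
/-!
Every non-root node has exactly one parent, so the four transition counts partition the `n - 1`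
non-root nodes. For a label `i`, the edges leaving `i`-labeled nodes number at most twice the
`i`-labeled nodes (each has at most two children), and all of these but possibly the root are
entered by an edge; hence `b i0 + b i1 ≤ 2 (b 0i + b 1i) + 2`. Substituting the total `n - 1`
into the case `i = 1` (resp. `i = 0`) gives the third (resp. fourth) inequality.
-/

open Finset

theorem Finset.card_filter_and_fin_two {α : Type*} (s : Finset α) (p : α → Prop)
    [DecidablePred p] (f : α → Fin 2) :
    #{x ∈ s | p x ∧ f x = 0} + #{x ∈ s | p x ∧ f x = 1} = #{x ∈ s | p x} := by
  conv_rhs => rw [card_eq_sum_card_fiberwise (f := f) (t := univ) fun _ _ => mem_univ _,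
    Fin.sum_univ_two, filter_filter, filter_filter]

theorem Fin.card_filter_val_ne_zero (n : ℕ) : #{v : Fin n | v.val ≠ 0} = n - 1 := by
  rcases n with _ | n
  · rfl
  · simp only [Fin.val_ne_zero_iff]
    rw [filter_ne', card_erase_of_mem (mem_univ _), card_univ, Fintype.card_fin]

theorem Fin.card_filter_le_card_filter_val_ne_zero_add_one {n : ℕ} (p : Fin n → Prop)
    [DecidablePred p] : #{v | p v} ≤ #{v | v.val ≠ 0 ∧ p v} + 1 := by
  have hroot : #{v ∈ ({v | p v} : Finset (Fin n)) | ¬v.val ≠ 0} ≤ 1 :=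
    card_le_one.mpr fun a ha b hb => by simp only [mem_filter] at ha hb; omega
  rw [← card_filter_add_card_filter_not (s := {v | p v}) (p := fun v => v.val ≠ 0),
    filter_filter]
  simp only [and_comm (a := p _)] at *
  omega

namespace PhyloTree

variable {n : ℕ} (T : PhyloTree n) (ℓ : Fin n → Fin 2)

theorem b_add_b_of_parent (i : Fin 2) :
    T.b ℓ i 0 + T.b ℓ i 1 = #{v | v.val ≠ 0 ∧ ℓ (T.parent v) = i} := by
  simp only [b, ← and_assoc]
  exact card_filter_and_fin_two _ _ _

theorem b_add_b_of_child (j : Fin 2) :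
    T.b ℓ 0 j + T.b ℓ 1 j = #{v | v.val ≠ 0 ∧ ℓ v = j} := by
  simp only [b, and_comm (a := ℓ (T.parent _) = _), ← and_assoc]
  exact card_filter_and_fin_two _ _ (fun v => ℓ (T.parent v))

theorem sum_b : T.b ℓ 0 0 + T.b ℓ 0 1 + (T.b ℓ 1 0 + T.b ℓ 1 1) = n - 1 := by
  rw [b_add_b_of_parent, b_add_b_of_parent, card_filter_and_fin_two,
    Fin.card_filter_val_ne_zero]

theorem card_children_le_two {T : PhyloTree n} (hT : T.IsBinary) (u : Fin n) :
    #(T.children u) ≤ 2 := by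
  rcases hT u with h | h
  · rw [IsLeaf] at h
    simp [h]
  · exact h.le

theorem card_edges_from_label_le {T : PhyloTree n} (hT : T.IsBinary) (i : Fin 2) :
    #{v | v.val ≠ 0 ∧ ℓ (T.parent v) = i} ≤ 2 * #{u | ℓ u = i} := by
  refine card_le_mul_card_image_of_maps_to (f := T.parent) (fun v hv => ?_) _ fun u _ => ?_
  · simp only [mem_filter, mem_univ, true_and] at hv ⊢
    exact hv.2
  · refine (card_le_card fun v hv => ?_).trans (card_children_le_two hT u)
    simp only [mem_filter, mem_univ, true_and] at hv
    simp only [children, mem_filter, mem_univ, true_and]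
    exact ⟨hv.1.1, hv.2⟩

theorem b_from_le_two_mul_b_into_add_two {T : PhyloTree n} (hT : T.IsBinary) (i : Fin 2) :
    T.b ℓ i 0 + T.b ℓ i 1 ≤ 2 * (T.b ℓ 0 i + T.b ℓ 1 i) + 2 := by
  rw [b_add_b_of_parent, b_add_b_of_child]
  have := Fin.card_filter_le_card_filter_val_ne_zero_add_one (fun u => ℓ u = i)
  have := card_edges_from_label_le ℓ hT i
  omega

end PhyloTree

/-- every transition vector of a labeling of a binary tree with n nodes
satisfies: all b_ij ≥ 0, b00+b01+b10+b11 = n−1, b00 − b01 + 2b10 ≤ n+1, and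
b11 − b10 + 2b01 ≤ n+1. -/
theorem stmt14 {n : ℕ} (hn : 0 < n) (T : PhyloTree n) (hT : T.IsBinary)
    (ℓ : Fin n → Fin 2) :
    (∀ i j : Fin 2, 0 ≤ (T.b ℓ i j : ℤ))
      ∧ (T.b ℓ 0 0 : ℤ) + T.b ℓ 0 1 + T.b ℓ 1 0 + T.b ℓ 1 1 = n - 1
      ∧ (T.b ℓ 0 0 : ℤ) - T.b ℓ 0 1 + 2 * T.b ℓ 1 0 ≤ n + 1
      ∧ (T.b ℓ 1 1 : ℤ) - T.b ℓ 1 0 + 2 * T.b ℓ 0 1 ≤ n + 1 := by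
  have hsum := T.sum_b ℓ
  have h0 := T.b_from_le_two_mul_b_into_add_two ℓ hT 0
  have h1 := T.b_from_le_two_mul_b_into_add_two ℓ hT 1
  refine ⟨fun i j => Int.natCast_nonneg _, ?_, ?_, ?_⟩ <;> omega
end
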